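/- Let G be a cograph on vertex set V partitioned into V₁ and V₂ with |V₁| = ⌈|V|/2⌉ and |V₂| = ⌊|V|/2⌋. Then there exist subsets U₁ ⊆ V₁ and U₂ ⊆ V₂ with |U_i| ≥ |V_i|/4 for i = 1, 2, such that either every vertex of U₁ is adjacent to every vertex of U₂, or no vertex of U₁ is adjacent to any vertex of U₂. -/

import Mathlib

/-- `G` is a cograph, i.e. it has no induced path on four vertices. -/
def IsCograph {V : Type*} (G : SimpleGraph V) : Prop :=
  ¬∃ a b c d : V, a ≠ c ∧ a ≠ d ∧ b ≠ d ∧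
    G.Adj a b ∧ G.Adj b c ∧ G.Adj c d ∧ ¬G.Adj a c ∧ ¬G.Adj a d ∧ ¬G.Adj b d

/-!
Descend the cotree keeping a window `W ⊆ A ∪ B` and two banks: `R`, with no edges to `W`, and
`Q`, complete to `W`, each holding less than a quarter of `A` and of `B`. The window meets both
`A` and `B`, so by Seinsche's theorem it splits into anticomplete parts `X`, `W \ X` in `G` or,
after complementing (which swaps the banks), in `Gᶜ`. If one of the pairwise anticomplete sets
`X`, `W \ X`, `R` holds a quarter of `A` while the other two hold a quarter of `B`, we are done.
Otherwise one of `X`, `W \ X` holds all but a subquarter of `A` and of `B` in `X ∪ (W \ X) ∪ R`;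
it becomes the new window and the rest goes to `R`.
-/

open Finset

lemma IsCograph.compl {V : Type*} {G : SimpleGraph V} (hG : IsCograph G) : IsCograph Gᶜ := by
  rintro ⟨a, b, c, d, hac, had, hbd, hab, hbc, hcd, nac, nad, nbd⟩
  simp only [SimpleGraph.compl_adj, not_and, not_not] at hab hbc hcd nac nad nbd
  exact hG ⟨b, d, a, c, fun h => hab.1 h.symm, hbc.1, fun h => hcd.1 h.symm,
    nbd hbd, (nad had).symm, nac hac, fun h => hab.2 h.symm, hbc.2, fun h => hcd.2 h.symm⟩

lemma Finset.card_union_inter_le {α : Type*} [DecidableEq α] (s t u : Finset α) :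
    #((s ∪ t) ∩ u) ≤ #(s ∩ u) + #(t ∩ u) := by
  rw [union_inter_distrib_right]
  exact card_union_le _ _

namespace SimpleGraph

variable {V : Type*} {G : SimpleGraph V}

def Anticomplete (G : SimpleGraph V) (s t : Finset V) : Prop :=
  ∀ x ∈ s, ∀ y ∈ t, ¬G.Adj x y

lemma Anticomplete.symm {s t : Finset V} (h : G.Anticomplete s t) : G.Anticomplete t s :=
  fun y hy x hx hadj => h x hx y hy hadj.symm

lemma Anticomplete.mono {s s' t t' : Finset V} (h : G.Anticomplete s t) (hs : s' ⊆ s)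
    (ht : t' ⊆ t) : G.Anticomplete s' t' :=
  fun x hx y hy => h x (hs hx) y (ht hy)

def HasLargeHomogeneousPair (G : SimpleGraph V) (A B : Finset V) : Prop :=
  ∃ X ⊆ A, ∃ Y ⊆ B, #A ≤ 4 * #X ∧ #B ≤ 4 * #Y ∧ (G.Anticomplete X Y ∨ Gᶜ.Anticomplete X Y)

lemma HasLargeHomogeneousPair.of_compl {A B : Finset V} (h : Gᶜ.HasLargeHomogeneousPair A B) :
    G.HasLargeHomogeneousPair A B := by
  obtain ⟨X, hX, Y, hY, hXc, hYc, hXY⟩ := h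
  rw [compl_compl] at hXY
  exact ⟨X, hX, Y, hY, hXc, hYc, hXY.symm⟩

variable [DecidableEq V]

lemma Anticomplete.union_left {s s' t : Finset V} (h : G.Anticomplete s t)
    (h' : G.Anticomplete s' t) : G.Anticomplete (s ∪ s') t := by
  intro x hx
  rcases mem_union.1 hx with hx | hx
  exacts [h x hx, h' x hx]

lemma Anticomplete.union_right {s t t' : Finset V} (h : G.Anticomplete s t)
    (h' : G.Anticomplete s t') : G.Anticomplete s (t ∪ t') :=
  (h.symm.union_left h'.symm).symm

def IsDisconnectedOn (G : SimpleGraph V) (W : Finset V) : Prop :=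
  ∃ X ⊂ W, X.Nonempty ∧ G.Anticomplete X (W \ X)

lemma isDisconnectedOn_insert_of_forall_not_adj {v : V} {W : Finset V} (hv : v ∉ W)
    (hW : W.Nonempty) (h : ∀ w ∈ W, ¬G.Adj v w) : G.IsDisconnectedOn (insert v W) := by
  obtain ⟨w, hw⟩ := hW
  refine ⟨{v}, (ssubset_iff_of_subset (by simp)).2 ⟨w, mem_insert_of_mem hw, ?_⟩,
    singleton_nonempty v, ?_⟩
  · rintro hwv
    exact hv (mem_singleton.1 hwv ▸ hw)
  · rw [sdiff_singleton_eq_erase, erase_insert hv]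
    simpa [Anticomplete] using h

/-- The part `C` is the connected component of `m` in `W`, described without walks. -/
lemma IsDisconnectedOn.exists_component {W : Finset V} {m : V} (hW : G.IsDisconnectedOn W)
    (hm : m ∈ W) :
    ∃ C ⊂ W, m ∈ C ∧ G.Anticomplete C (W \ C) ∧
      ∀ Z ⊂ C, m ∈ Z → ∃ z ∈ Z, ∃ x ∈ C \ Z, G.Adj z x := by
  let IsPart : Finset V → Prop := fun C => C ⊂ W ∧ m ∈ C ∧ G.Anticomplete C (W \ C)
  have hpart : ∃ C, IsPart C := by
    obtain ⟨X, hXW, hXne, hX⟩ := hW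
    by_cases hmX : m ∈ X
    · exact ⟨X, hXW, hmX, hX⟩
    · refine ⟨W \ X, sdiff_ssubset hXW.subset hXne, mem_sdiff.2 ⟨hm, hmX⟩, ?_⟩
      rw [Finset.sdiff_sdiff_eq_self hXW.subset]
      exact hX.symm
  obtain ⟨C, ⟨hCW, hmC, hC⟩, hmin⟩ := exists_minimal_of_wellFoundedLT IsPart hpart
  refine ⟨C, hCW, hmC, hC, fun Z hZC hmZ => ?_⟩
  by_contra! hZ
  have hZW : G.Anticomplete Z (W \ Z) := by
    intro z hz w hw
    by_cases hwC : w ∈ C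
    · exact hZ z hz w (mem_sdiff.2 ⟨hwC, (mem_sdiff.1 hw).2⟩)
    · exact hC z (hZC.subset hz) w (mem_sdiff.2 ⟨(mem_sdiff.1 hw).1, hwC⟩)
  exact hZC.not_subset (hmin ⟨hZC.trans hCW, hmZ, hZW⟩ hZC.subset)

/-- If `v` is complete to `W`, then `insert v W` splits in `Gᶜ`. Otherwise `v` misses some `m`;
if `v` sees both a vertex of the component `C` of `m` and a vertex `y` outside `C`, an edge `z x`
of `C` from a non-neighbour to a neighbour of `v` gives the induced path `z x v y`. In the
remaining cases `C` or `insert v C` splits off. -/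
theorem _root_.IsCograph.isDisconnectedOn_insert (hG : IsCograph G) {v : V} {W : Finset V}
    (hv : v ∉ W) (hW : G.IsDisconnectedOn W) :
    G.IsDisconnectedOn (insert v W) ∨ Gᶜ.IsDisconnectedOn (insert v W) := by
  classical
  by_cases hfull : ∀ m ∈ W, G.Adj v m
  · have hWne : W.Nonempty := by
      obtain ⟨X, hXW, ⟨x, hx⟩, -⟩ := hW
      exact ⟨x, hXW.subset hx⟩
    refine .inr (isDisconnectedOn_insert_of_forall_not_adj hv hWne ?_)
    simp +contextual [hfull]
  push Not at hfull
  obtain ⟨m, hm, hvm⟩ := hfull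
  obtain ⟨C, hCW, hmC, hC, hconn⟩ := hW.exists_component hm
  have hvC : v ∉ C := fun h => hv (hCW.subset h)
  left
  by_cases hx : ∃ x ∈ C, G.Adj v x
  · by_cases hy : ∃ y ∈ W \ C, G.Adj v y
    · exfalso
      obtain ⟨x, hxC, hvx⟩ := hx
      obtain ⟨y, hyW, hvy⟩ := hy
      obtain ⟨z, hzZ, x', hx'C, hzx'⟩ :=
        hconn (C.filter (¬G.Adj v ·)) (ssubset_iff_of_subset (filter_subset _ _) |>.2
          ⟨x, hxC, by simpa using fun _ => hvx⟩) (mem_filter.2 ⟨hmC, hvm⟩)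
      obtain ⟨hzC, hvz⟩ := mem_filter.1 hzZ
      have hvx' : G.Adj v x' := by
        by_contra h
        exact (mem_sdiff.1 hx'C).2 (mem_filter.2 ⟨(mem_sdiff.1 hx'C).1, h⟩)
      refine hG ⟨z, x', v, y, fun h => hvC (h ▸ hzC), ?_, ?_, hzx', hvx'.symm, hvy,
        fun h => hvz h.symm, hC z hzC y hyW, hC x' (mem_sdiff.1 hx'C).1 y hyW⟩
      · rintro rfl; exact (mem_sdiff.1 hyW).2 hzC
      · rintro rfl; exact (mem_sdiff.1 hyW).2 (mem_sdiff.1 hx'C).1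
    · push Not at hy
      obtain ⟨w, hw⟩ := sdiff_nonempty.2 hCW.not_subset
      have hwv : w ≠ v := fun h => hv (h ▸ (mem_sdiff.1 hw).1)
      refine ⟨insert v C, (ssubset_iff_of_subset (insert_subset_insert v hCW.subset)).2
        ⟨w, mem_insert_of_mem (mem_sdiff.1 hw).1, by simp [(mem_sdiff.1 hw).2, hwv]⟩,
        insert_nonempty v C, ?_⟩
      · rw [insert_sdiff_insert, sdiff_insert_of_notMem hv]
        intro a ha b hb
        rcases mem_insert.1 ha with rfl | haC
        · exact hy b hb
        · exact hC a haC b hb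
  · push Not at hx
    refine ⟨C, hCW.trans (ssubset_insert hv), ⟨m, hmC⟩, ?_⟩
    rw [insert_sdiff_of_notMem _ hvC]
    intro a ha b hb
    rcases mem_insert.1 hb with rfl | hbW
    · exact fun h => hx a ha h.symm
    · exact hC a ha b hbW

/-- Seinsche's theorem. -/
theorem _root_.IsCograph.isDisconnectedOn_or_compl (hG : IsCograph G) {W : Finset V}
    (hW : 2 ≤ #W) : G.IsDisconnectedOn W ∨ Gᶜ.IsDisconnectedOn W := by
  induction W using Finset.induction_on with
  | empty => simp at hW
  | insert v W hv ih =>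
    rw [card_insert_of_notMem hv] at hW
    obtain hW1 | hW2 := (show #W = 1 ∨ 2 ≤ #W by omega)
    · obtain ⟨w, rfl⟩ := card_eq_one.1 hW1
      by_cases hvw : G.Adj v w
      · refine .inr (isDisconnectedOn_insert_of_forall_not_adj hv (singleton_nonempty w) ?_)
        simp [hvw]
      · exact .inl (isDisconnectedOn_insert_of_forall_not_adj hv (singleton_nonempty w)
          (by simpa using hvw))
    · rcases ih hW2 with h | h
      · exact hG.isDisconnectedOn_insert hv h
      · simpa [or_comm] using hG.compl.isDisconnectedOn_insert hv h

def IsSubquarter (A B S : Finset V) : Prop :=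
  4 * #(S ∩ A) < #A ∧ 4 * #(S ∩ B) < #B

lemma hasLargeHomogeneousPair_or_isSubquarter {A B P O : Finset V} (hPO : G.Anticomplete P O)
    (hA : 2 * #A ≤ 4 * #((P ∪ O) ∩ A)) (hB : 2 * #B ≤ 4 * #((P ∪ O) ∩ B)) :
    G.HasLargeHomogeneousPair A B ∨ IsSubquarter A B P ∨ IsSubquarter A B O := by
  by_cases hPA : #A ≤ 4 * #(P ∩ A) ∧ #B ≤ 4 * #(O ∩ B)
  · exact .inl ⟨P ∩ A, inter_subset_right, O ∩ B, inter_subset_right, hPA.1, hPA.2,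
      .inl (hPO.mono inter_subset_left inter_subset_left)⟩
  by_cases hOA : #A ≤ 4 * #(O ∩ A) ∧ #B ≤ 4 * #(P ∩ B)
  · exact .inl ⟨O ∩ A, inter_subset_right, P ∩ B, inter_subset_right, hOA.1, hOA.2,
      .inl (hPO.symm.mono inter_subset_left inter_subset_left)⟩
  have := card_union_inter_le P O A
  have := card_union_inter_le P O B
  unfold IsSubquarter
  omega

/-- The window `W` is the current node of the cotree; the banks `R` (no edges to `W`) and `Q`
(complete to `W`) hold what the descent has discarded. -/
structure DescentState (G : SimpleGraph V) (A B W R Q : Finset V) : Prop where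
  cover : A ∪ B ⊆ W ∪ R ∪ Q
  subquarter_left : IsSubquarter A B R
  subquarter_right : IsSubquarter A B Q
  anticomplete_left : G.Anticomplete R W
  anticomplete_right : Gᶜ.Anticomplete Q W

namespace DescentState

variable {A B W R Q : Finset V}

lemma compl (h : G.DescentState A B W R Q) : Gᶜ.DescentState A B W Q R where
  cover := union_right_comm W R Q ▸ h.cover
  subquarter_left := h.subquarter_right
  subquarter_right := h.subquarter_left
  anticomplete_left := h.anticomplete_right
  anticomplete_right := (compl_compl G).symm ▸ h.anticomplete_left

lemma card_left_le (h : G.DescentState A B W R Q) :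
    #A ≤ #((W ∪ R) ∩ A) + #(Q ∩ A) := by
  calc #A = #((W ∪ R ∪ Q) ∩ A) := by
        rw [inter_eq_right.2 (subset_union_left.trans h.cover)]
    _ ≤ _ := card_union_inter_le _ _ _

lemma card_right_le (h : G.DescentState A B W R Q) :
    #B ≤ #((W ∪ R) ∩ B) + #(Q ∩ B) := by
  calc #B = #((W ∪ R ∪ Q) ∩ B) := by
        rw [inter_eq_right.2 (subset_union_right.trans h.cover)]
    _ ≤ _ := card_union_inter_le _ _ _

lemma two_le_card (h : G.DescentState A B W R Q) (hAB : Disjoint A B) : 2 ≤ #W := by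
  have hA := h.card_left_le
  have hB := h.card_right_le
  have := card_union_inter_le W R A
  have := card_union_inter_le W R B
  have := h.subquarter_left
  have := h.subquarter_right
  unfold IsSubquarter at *
  obtain ⟨a, ha⟩ : (W ∩ A).Nonempty := card_pos.1 (by omega)
  obtain ⟨b, hb⟩ : (W ∩ B).Nonempty := card_pos.1 (by omega)
  refine one_lt_card.2 ⟨a, (mem_inter.1 ha).1, b, (mem_inter.1 hb).1, ?_⟩
  rintro rfl
  exact Finset.disjoint_left.1 hAB (mem_inter.1 ha).2 (mem_inter.1 hb).2

lemma shrink (h : G.DescentState A B W R Q) {C : Finset V} (hCW : C ⊆ W)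
    (hC : G.Anticomplete (W \ C) C) (hsmall : IsSubquarter A B (W \ C ∪ R)) :
    G.DescentState A B C (W \ C ∪ R) Q where
  cover := h.cover.trans <| union_subset_union_left <| by
    rw [← union_assoc, union_sdiff_of_subset hCW]
  subquarter_left := hsmall
  subquarter_right := h.subquarter_right
  anticomplete_left := hC.union_left (h.anticomplete_left.mono subset_rfl hCW)
  anticomplete_right := h.anticomplete_right.mono subset_rfl hCW

lemma descend (h : G.DescentState A B W R Q) {X : Finset V} (hXW : X ⊂ W) (hX : X.Nonempty)
    (hXa : G.Anticomplete X (W \ X)) :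
    G.HasLargeHomogeneousPair A B ∨ ∃ C ⊂ W, G.DescentState A B C (W \ C ∪ R) Q := by
  have hRW := h.anticomplete_left
  have hA := h.card_left_le
  have hB := h.card_right_le
  have := h.subquarter_left
  have := h.subquarter_right
  unfold IsSubquarter at *
  have hXY : X ∪ (W \ X ∪ R) = W ∪ R := by rw [← union_assoc, union_sdiff_of_subset hXW.subset]
  have hYX : W \ X ∪ (X ∪ R) = W ∪ R := by rw [← union_assoc, sdiff_union_of_subset hXW.subset]
  rcases hasLargeHomogeneousPair_or_isSubquarter (A := A) (B := B)
      (hXa.union_right (hRW.symm.mono hXW.subset subset_rfl))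
      (by rw [hXY]; omega) (by rw [hXY]; omega)
    with hgood | hXs | hYRs
  · exact .inl hgood
  · rcases hasLargeHomogeneousPair_or_isSubquarter (A := A) (B := B)
        (hXa.symm.union_right (hRW.symm.mono sdiff_subset subset_rfl))
        (by rw [hYX]; omega) (by rw [hYX]; omega)
      with hgood | hYs | hXRs
    · exact .inl hgood
    · exfalso
      have hW := card_union_inter_le X (W \ X) A
      rw [union_sdiff_of_subset hXW.subset] at hW
      have := card_union_inter_le W R A
      unfold IsSubquarter at hXs hYs
      omega
    · have hWY := Finset.sdiff_sdiff_eq_self hXW.subset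
      exact .inr ⟨W \ X, sdiff_ssubset hXW.subset hX,
        h.shrink sdiff_subset (by rwa [hWY]) (by rwa [hWY])⟩
  · exact .inr ⟨X, hXW, h.shrink hXW.subset hXa.symm hYRs⟩

theorem hasLargeHomogeneousPair (hG : IsCograph G) (hAB : Disjoint A B)
    (h : G.DescentState A B W R Q) : G.HasLargeHomogeneousPair A B := by
  induction W using Finset.strongInduction generalizing G R Q with
  | H W ih =>
  rcases hG.isDisconnectedOn_or_compl (h.two_le_card hAB) with
    ⟨X, hXW, hX, hXa⟩ | ⟨X, hXW, hX, hXa⟩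
  · rcases h.descend hXW hX hXa with hgood | ⟨C, hCW, hC⟩
    exacts [hgood, ih C hCW hG hC]
  · rcases h.compl.descend hXW hX hXa with hgood | ⟨C, hCW, hC⟩
    exacts [hgood.of_compl, (ih C hCW hG.compl hC).of_compl]

end DescentState

theorem _root_.IsCograph.hasLargeHomogeneousPair (hG : IsCograph G) {A B : Finset V}
    (hAB : Disjoint A B) : G.HasLargeHomogeneousPair A B := by
  rcases A.eq_empty_or_nonempty with rfl | hA
  · exact ⟨∅, subset_rfl, B, subset_rfl, by simp, by omega, .inl (by simp [Anticomplete])⟩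
  rcases B.eq_empty_or_nonempty with rfl | hB
  · exact ⟨A, subset_rfl, ∅, subset_rfl, by omega, by simp, .inl (by simp [Anticomplete])⟩
  refine DescentState.hasLargeHomogeneousPair hG hAB (W := A ∪ B) (R := ∅) (Q := ∅)
    ⟨by simp, ?_, ?_, by simp [Anticomplete], by simp [Anticomplete]⟩ <;>
  simpa [IsSubquarter, card_pos] using ⟨hA, hB⟩

end SimpleGraph

theorem stmt_11_general {V : Type*} [Fintype V] [DecidableEq V] (G : SimpleGraph V)
    (hG : IsCograph G) (V₁ : Finset V) :
    ∃ U₁ U₂ : Finset V, U₁ ⊆ V₁ ∧ U₂ ⊆ V₁ᶜ ∧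
      (V₁.card : ℝ) / 4 ≤ (U₁.card : ℝ) ∧ (V₁ᶜ.card : ℝ) / 4 ≤ (U₂.card : ℝ) ∧
      ((∀ u ∈ U₁, ∀ v ∈ U₂, G.Adj u v) ∨ (∀ u ∈ U₁, ∀ v ∈ U₂, ¬G.Adj u v)) := by
  obtain ⟨X, hX, Y, hY, hXc, hYc, hXY⟩ :=
    hG.hasLargeHomogeneousPair (disjoint_compl_right (a := V₁))
  refine ⟨X, Y, hX, hY, ?_, ?_, hXY.symm.imp (fun h u hu v hv => ?_) id⟩
  · rw [div_le_iff₀ four_pos]; exact_mod_cast (by omega : V₁.card ≤ X.card * 4)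
  · rw [div_le_iff₀ four_pos]; exact_mod_cast (by omega : V₁ᶜ.card ≤ Y.card * 4)
  · have hne : u ≠ v := fun huv => mem_compl.1 (hY hv) (huv ▸ hX hu)
    simpa [hne] using h u hu v hv

/-- for a cograph `G` with vertex set split into `V₁` of size `⌈n/2⌉`
and `V₂ = V₁ᶜ` of size `⌊n/2⌋`, there are `U₁ ⊆ V₁`, `U₂ ⊆ V₂` with
`|Uᵢ| ≥ |Vᵢ|/4` such that all pairs across are adjacent, or none are. -/
theorem stmt_11 {V : Type*} [Fintype V] [DecidableEq V] (G : SimpleGraph V)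
    (hG : IsCograph G) (V₁ : Finset V) (hcard : V₁.card = (Fintype.card V + 1) / 2) :
    ∃ U₁ U₂ : Finset V, U₁ ⊆ V₁ ∧ U₂ ⊆ V₁ᶜ ∧
      (V₁.card : ℝ) / 4 ≤ (U₁.card : ℝ) ∧ (V₁ᶜ.card : ℝ) / 4 ≤ (U₂.card : ℝ) ∧
      ((∀ u ∈ U₁, ∀ v ∈ U₂, G.Adj u v) ∨ (∀ u ∈ U₁, ∀ v ∈ U₂, ¬G.Adj u v)) :=
  stmt_11_general G hG V₁
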